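/- arXiv:1407.3961 — 4 statements merged into one kernel-verified Lean document; each statement's English description precedes it below -/
import Mathlib

section
/- (Theorem 1.) Let (X, μ) be a measure space and let g, f : X → [0,∞) be measurable with ∫ g dμ = ∫ f dμ = 1 and with f > 0 and g > 0 μ-almost everywhere. Let β > 0 and γ ∈ ℝ, set A = 1 + γ(1−β) and B = β − γ(1−β), and assume A ≠ 0 and B ≠ 0. If the three integrals ∫ f^{1+β} dμ, ∫ g^{1+β} dμ and ∫ f^B g^A dμ are all finite and strictly positive, then LSD_{β,γ}(g,f) = (1/A)·log(∫ f^{1+β} dμ) − ((1+β)/(A·B))·log(∫ f^B g^A dμ) + (1/B)·log(∫ g^{1+β} dμ) ≥ 0. -/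
open MeasureTheory
open scoped ENNReal NNReal

/-!
Multiplying `LSD` by `A * B` leaves
`B log ∫ f^(1+β) + A log ∫ g^(1+β) - (1 + β) log ∫ f^B g^A`.
Since `A + B = 1 + β`, when `A, B > 0` this is nonnegative by Hölder's inequality with the
exponents `(1+β)/B`, `(1+β)/A`.
When `A < 0 < B` one applies Hölder instead to `f^(1+β) = (f^B g^A)^((1+β)/B) · (g^(1+β))^(-A/B)`,
which reverses the inequality and also the sign of `A * B`; the case `B < 0` is symmetric.
-/

/-- The logarithmic S-divergence `LSD_{β,γ}(g,f)` with `A = 1 + γ(1−β)`,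
`B = β − γ(1−β)`. -/
noncomputable def LSD {X : Type*} [MeasurableSpace X] (μ : Measure X) (β A B : ℝ)
    (g f : X → ℝ≥0) : ℝ :=
  (1 / A) * Real.log (∫⁻ x, (f x : ℝ≥0∞) ^ (1 + β) ∂μ).toReal -
    ((1 + β) / (A * B)) *
      Real.log (∫⁻ x, (f x : ℝ≥0∞) ^ B * (g x : ℝ≥0∞) ^ A ∂μ).toReal +
    (1 / B) * Real.log (∫⁻ x, (g x : ℝ≥0∞) ^ (1 + β) ∂μ).toReal

theorem ENNReal.log_toReal_le_of_le_rpow_mul_rpow {M F G : ℝ≥0∞} {a b : ℝ} (hM : 0 < M.toReal)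
    (hF : 0 < F.toReal) (hG : 0 < G.toReal) (h : M ≤ F ^ a * G ^ b) :
    Real.log M.toReal ≤ a * Real.log F.toReal + b * Real.log G.toReal := by
  obtain ⟨hF0, hFtop⟩ := ENNReal.toReal_pos_iff.1 hF
  obtain ⟨hG0, hGtop⟩ := ENNReal.toReal_pos_iff.1 hG
  have hFG : F ^ a * G ^ b ≠ ∞ := ENNReal.mul_ne_top
    (ENNReal.rpow_ne_top_of_ne_zero hF0.ne' hFtop.ne)
    (ENNReal.rpow_ne_top_of_ne_zero hG0.ne' hGtop.ne)
  have hreal : M.toReal ≤ F.toReal ^ a * G.toReal ^ b := by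
    simpa only [ENNReal.toReal_mul, ENNReal.toReal_rpow] using ENNReal.toReal_mono hFG h
  calc Real.log M.toReal ≤ Real.log (F.toReal ^ a * G.toReal ^ b) := Real.log_le_log hM hreal
    _ = a * Real.log F.toReal + b * Real.log G.toReal := by
      rw [Real.log_mul (by positivity) (by positivity), Real.log_rpow hF, Real.log_rpow hG]

section Holder

variable {X : Type*} [MeasurableSpace X] {μ : Measure X} {f g : X → ℝ≥0∞} {A B p : ℝ}

theorem ENNReal.lintegral_rpow_mul_rpow_le (hf : AEMeasurable f μ) (hg : AEMeasurable g μ)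
    (hA : 0 ≤ A) (hB : 0 ≤ B) (hp : 0 < p) (hAB : A + B = p) :
    ∫⁻ x, f x ^ B * g x ^ A ∂μ ≤
      (∫⁻ x, f x ^ p ∂μ) ^ (B / p) * (∫⁻ x, g x ^ p ∂μ) ^ (A / p) := by
  have holder := lintegral_mul_norm_pow_le (hf.pow_const p) (hg.pow_const p)
    (div_nonneg hB hp.le) (div_nonneg hA hp.le) (by field_simp; linarith)
  simpa only [← ENNReal.rpow_mul, mul_div_cancel₀ _ hp.ne'] using holder

theorem ENNReal.lintegral_rpow_le_of_neg (hf : AEMeasurable f μ) (hg : AEMeasurable g μ)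
    (hA : A < 0) (hp : 0 < p) (hAB : A + B = p) (hg0 : ∀ᵐ x ∂μ, g x ≠ 0)
    (hgtop : ∀ᵐ x ∂μ, g x ≠ ∞) :
    ∫⁻ x, f x ^ p ∂μ ≤
      (∫⁻ x, f x ^ B * g x ^ A ∂μ) ^ (p / B) * (∫⁻ x, g x ^ p ∂μ) ^ (-A / B) := by
  have hB : 0 < B := by linarith
  have hpB : 0 ≤ p / B := div_nonneg hp.le hB.le
  have hsplit : (fun x ↦ f x ^ p) =ᵐ[μ]
      fun x ↦ (f x ^ B * g x ^ A) ^ (p / B) * (g x ^ p) ^ (-A / B) := by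
    filter_upwards [hg0, hgtop] with x h0 htop
    rw [ENNReal.mul_rpow_of_nonneg _ _ hpB, ← ENNReal.rpow_mul, ← ENNReal.rpow_mul,
      ← ENNReal.rpow_mul, mul_assoc, ← ENNReal.rpow_add _ _ h0 htop, mul_div_cancel₀ _ hB.ne',
      show A * (p / B) + p * (-A / B) = 0 by ring, ENNReal.rpow_zero, mul_one]
  rw [lintegral_congr_ae hsplit]
  exact lintegral_mul_norm_pow_le ((hf.pow_const B).mul (hg.pow_const A)) (hg.pow_const p)
    hpB (div_nonneg (by linarith) hB.le) (by field_simp; linarith)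

theorem mul_log_lintegral_rpow_mul_rpow_le (hf : AEMeasurable f μ) (hg : AEMeasurable g μ)
    (hA : 0 < A) (hB : 0 < B) (hAB : A + B = p)
    (hM : 0 < (∫⁻ x, f x ^ B * g x ^ A ∂μ).toReal)
    (hF : 0 < (∫⁻ x, f x ^ p ∂μ).toReal) (hG : 0 < (∫⁻ x, g x ^ p ∂μ).toReal) :
    p * Real.log (∫⁻ x, f x ^ B * g x ^ A ∂μ).toReal ≤
      B * Real.log (∫⁻ x, f x ^ p ∂μ).toReal + A * Real.log (∫⁻ x, g x ^ p ∂μ).toReal := by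
  have hp : 0 < p := by linarith
  have hlog := ENNReal.log_toReal_le_of_le_rpow_mul_rpow hM hF hG
    (ENNReal.lintegral_rpow_mul_rpow_le hf hg hA.le hB.le hp hAB)
  have hscaled := mul_le_mul_of_nonneg_left hlog hp.le
  field_simp at hscaled
  linarith

theorem le_mul_log_lintegral_rpow_mul_rpow_of_neg (hf : AEMeasurable f μ)
    (hg : AEMeasurable g μ) (hA : A < 0) (hp : 0 < p) (hAB : A + B = p)
    (hg0 : ∀ᵐ x ∂μ, g x ≠ 0) (hgtop : ∀ᵐ x ∂μ, g x ≠ ∞)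
    (hM : 0 < (∫⁻ x, f x ^ B * g x ^ A ∂μ).toReal)
    (hF : 0 < (∫⁻ x, f x ^ p ∂μ).toReal) (hG : 0 < (∫⁻ x, g x ^ p ∂μ).toReal) :
    B * Real.log (∫⁻ x, f x ^ p ∂μ).toReal + A * Real.log (∫⁻ x, g x ^ p ∂μ).toReal ≤
      p * Real.log (∫⁻ x, f x ^ B * g x ^ A ∂μ).toReal := by
  have hB : 0 < B := by linarith
  have hlog := ENNReal.log_toReal_le_of_le_rpow_mul_rpow hF hM hG
    (ENNReal.lintegral_rpow_le_of_neg hf hg hA hp hAB hg0 hgtop)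
  have hscaled := mul_le_mul_of_nonneg_left hlog hB.le
  field_simp at hscaled
  linarith

end Holder

theorem LSD_eq_div {X : Type*} [MeasurableSpace X] (μ : Measure X) {β A B : ℝ}
    (g f : X → ℝ≥0) (hA : A ≠ 0) (hB : B ≠ 0) :
    LSD μ β A B g f =
      (B * Real.log (∫⁻ x, (f x : ℝ≥0∞) ^ (1 + β) ∂μ).toReal +
        A * Real.log (∫⁻ x, (g x : ℝ≥0∞) ^ (1 + β) ∂μ).toReal -
        (1 + β) * Real.log (∫⁻ x, (f x : ℝ≥0∞) ^ B * (g x : ℝ≥0∞) ^ A ∂μ).toReal) /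
        (A * B) := by
  rw [LSD]
  field_simp
  ring

theorem lsd_nonneg_general {X : Type*} [MeasurableSpace X] (μ : Measure X)
    (g f : X → ℝ≥0) (hg : Measurable g) (hf : Measurable f)
    (hfpos : ∀ᵐ x ∂μ, 0 < f x) (hgpos : ∀ᵐ x ∂μ, 0 < g x)
    (β γ A B : ℝ) (hβ : 0 < β)
    (hA : A = 1 + γ * (1 - β)) (hB : B = β - γ * (1 - β))
    (hA0 : A ≠ 0) (hB0 : B ≠ 0)
    (hfint : 0 < ∫⁻ x, (f x : ℝ≥0∞) ^ (1 + β) ∂μ)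
    (hfint' : ∫⁻ x, (f x : ℝ≥0∞) ^ (1 + β) ∂μ < ∞)
    (hgint : 0 < ∫⁻ x, (g x : ℝ≥0∞) ^ (1 + β) ∂μ)
    (hgint' : ∫⁻ x, (g x : ℝ≥0∞) ^ (1 + β) ∂μ < ∞)
    (hfg : 0 < ∫⁻ x, (f x : ℝ≥0∞) ^ B * (g x : ℝ≥0∞) ^ A ∂μ)
    (hfg' : ∫⁻ x, (f x : ℝ≥0∞) ^ B * (g x : ℝ≥0∞) ^ A ∂μ < ∞) :
    0 ≤ LSD μ β A B g f := by
  have hAB : A + B = 1 + β := by rw [hA, hB]; ring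
  have hp : 0 < 1 + β := by linarith
  have hF := ENNReal.toReal_pos hfint.ne' hfint'.ne
  have hG := ENNReal.toReal_pos hgint.ne' hgint'.ne
  have hM := ENNReal.toReal_pos hfg.ne' hfg'.ne
  have hf' := hf.coe_nnreal_ennreal.aemeasurable (μ := μ)
  have hg' := hg.coe_nnreal_ennreal.aemeasurable (μ := μ)
  have hfin : ∀ {h : X → ℝ≥0}, ∀ᵐ x ∂μ, (h x : ℝ≥0∞) ≠ ∞ := ae_of_all _ fun _ ↦ ENNReal.coe_ne_top
  rw [LSD_eq_div μ g f hA0 hB0]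
  rcases hA0.lt_or_gt with hA | hA
  · have hg0 : ∀ᵐ x ∂μ, (g x : ℝ≥0∞) ≠ 0 := hgpos.mono fun x hx ↦ by simpa using hx.ne'
    have := le_mul_log_lintegral_rpow_mul_rpow_of_neg hf' hg' hA hp hAB hg0 hfin hM hF hG
    exact div_nonneg_of_nonpos (by linarith) (mul_nonpos_of_nonpos_of_nonneg hA.le (by linarith))
  rcases hB0.lt_or_gt with hB | hB
  · have hf0 : ∀ᵐ x ∂μ, (f x : ℝ≥0∞) ≠ 0 := hfpos.mono fun x hx ↦ by simpa using hx.ne'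
    have hcomm : ∫⁻ x, (g x : ℝ≥0∞) ^ A * (f x : ℝ≥0∞) ^ B ∂μ =
        ∫⁻ x, (f x : ℝ≥0∞) ^ B * (g x : ℝ≥0∞) ^ A ∂μ := by simp only [mul_comm]
    have := le_mul_log_lintegral_rpow_mul_rpow_of_neg hg' hf' hB hp (by linarith) hf0 hfin
      (hcomm ▸ hM) hG hF
    rw [hcomm] at this
    exact div_nonneg_of_nonpos (by linarith) (mul_nonpos_of_nonneg_of_nonpos hA.le hB.le)
  · have := mul_log_lintegral_rpow_mul_rpow_le hf' hg' hA hB hAB hM hF hG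
    exact div_nonneg (by linarith) (mul_pos hA hB).le

/-- Theorem 1: the logarithmic S-divergence is nonnegative. -/
theorem lsd_nonneg {X : Type*} [MeasurableSpace X] (μ : Measure X)
    (g f : X → ℝ≥0) (hg : Measurable g) (hf : Measurable f)
    (hg1 : ∫⁻ x, (g x : ℝ≥0∞) ∂μ = 1) (hf1 : ∫⁻ x, (f x : ℝ≥0∞) ∂μ = 1)
    (hfpos : ∀ᵐ x ∂μ, 0 < f x) (hgpos : ∀ᵐ x ∂μ, 0 < g x)
    (β γ A B : ℝ) (hβ : 0 < β)
    (hA : A = 1 + γ * (1 - β)) (hB : B = β - γ * (1 - β))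
    (hA0 : A ≠ 0) (hB0 : B ≠ 0)
    (hfint : 0 < ∫⁻ x, (f x : ℝ≥0∞) ^ (1 + β) ∂μ)
    (hfint' : ∫⁻ x, (f x : ℝ≥0∞) ^ (1 + β) ∂μ < ∞)
    (hgint : 0 < ∫⁻ x, (g x : ℝ≥0∞) ^ (1 + β) ∂μ)
    (hgint' : ∫⁻ x, (g x : ℝ≥0∞) ^ (1 + β) ∂μ < ∞)
    (hfg : 0 < ∫⁻ x, (f x : ℝ≥0∞) ^ B * (g x : ℝ≥0∞) ^ A ∂μ)
    (hfg' : ∫⁻ x, (f x : ℝ≥0∞) ^ B * (g x : ℝ≥0∞) ^ A ∂μ < ∞) :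
    0 ≤ LSD μ β A B g f :=
  lsd_nonneg_general μ g f hg hf hfpos hgpos β γ A B hβ hA hB hA0 hB0 hfint hfint' hgint hgint' hfg
    hfg'
end

section
/- Let (X, μ) be a measure space and let g, f : X → [0,∞) be measurable with ∫ g dμ = ∫ f dμ = 1. Let β > 0 and let A > 0, B > 0 with A + B = 1 + β, and assume ∫ f^{1+β} dμ, ∫ g^{1+β} dμ and ∫ f^B g^A dμ are all finite and strictly positive. Then LSD_{β,γ}(g,f) = (1/A)·log(∫ f^{1+β} dμ) − ((1+β)/(A·B))·log(∫ f^B g^A dμ) + (1/B)·log(∫ g^{1+β} dμ) equals 0 if and only if f = g μ-almost everywhere. -/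
open MeasureTheory
open scoped ENNReal NNReal

/-!
Put `p = 1 + β = A + B`, `t = B / p` and `s = A / p`, so that `t + s = 1`. Clearing the logarithms,
`LSD` vanishes exactly when `∫ f^B g^A = (∫ f^p)^t (∫ g^p)^s`, i.e. when Hölder's inequality for
`φ = f^p`, `ψ = g^p` with weights `t, s` is an equality. After normalising `φ` and `ψ` to mass one,
Hölder is the integral of the pointwise weighted AM-GM inequality `φ^t ψ^s ≤ t φ + s ψ`, so equality
forces AM-GM to be an equality almost everywhere, i.e. `f^p` and `g^p` are proportional. Then `f` is
a constant multiple of `g`, and `∫ f = ∫ g = 1` makes the constant `1`.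
-/

theorem log_combination_eq_zero_iff {A B p F G M : ℝ} (hA : A ≠ 0) (hB : B ≠ 0) (hp : p ≠ 0)
    (hF : 0 < F) (hG : 0 < G) (hM : 0 < M) :
    1 / A * Real.log F - p / (A * B) * Real.log M + 1 / B * Real.log G = 0 ↔
      M = F ^ (B / p) * G ^ (A / p) := by
  have hlog : Real.log (F ^ (B / p) * G ^ (A / p)) = B / p * Real.log F + A / p * Real.log G := by
    rw [Real.log_mul (by positivity) (by positivity), Real.log_rpow hF, Real.log_rpow hG]
  have hexpand : 1 / A * Real.log F - p / (A * B) * Real.log M + 1 / B * Real.log G =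
      p / (A * B) * (Real.log (F ^ (B / p) * G ^ (A / p)) - Real.log M) := by
    rw [hlog]
    field_simp
    ring
  rw [hexpand, mul_eq_zero, or_iff_right (div_ne_zero hp (mul_ne_zero hA hB)), sub_eq_zero,
    Real.log_injOn_pos.eq_iff (Set.mem_Ioi.2 (by positivity)) hM, eq_comm]

namespace ENNReal

theorem geom_mean_le_arith_mean2_weighted {t s : ℝ} (ht : 0 ≤ t) (hs : 0 ≤ s) (hts : t + s = 1)
    {a b : ℝ≥0∞} (ha : a ≠ ∞) (hb : b ≠ ∞) :
    a ^ t * b ^ s ≤ ENNReal.ofReal t * a + ENNReal.ofReal s * b := by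
  lift a to ℝ≥0 using ha
  lift b to ℝ≥0 using hb
  rw [← ofReal_coe_nnreal (p := a), ← ofReal_coe_nnreal (p := b),
    ofReal_rpow_of_nonneg a.coe_nonneg ht, ofReal_rpow_of_nonneg b.coe_nonneg hs,
    ← ofReal_mul (by positivity), ← ofReal_mul ht, ← ofReal_mul hs,
    ← ofReal_add (by positivity) (by positivity)]
  exact ofReal_le_ofReal
    (Real.geom_mean_le_arith_mean2_weighted ht hs a.coe_nonneg b.coe_nonneg hts)

theorem geom_mean_eq_arith_mean2_weighted_iff_of_pos {t s : ℝ} (ht : 0 < t) (hs : 0 < s)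
    (hts : t + s = 1) {a b : ℝ≥0∞} (ha : a ≠ ∞) (hb : b ≠ ∞) :
    a ^ t * b ^ s = ENNReal.ofReal t * a + ENNReal.ofReal s * b ↔ a = b := by
  lift a to ℝ≥0 using ha
  lift b to ℝ≥0 using hb
  rw [← ofReal_coe_nnreal (p := a), ← ofReal_coe_nnreal (p := b),
    ofReal_rpow_of_nonneg a.coe_nonneg ht.le, ofReal_rpow_of_nonneg b.coe_nonneg hs.le,
    ← ofReal_mul (by positivity), ← ofReal_mul ht.le, ← ofReal_mul hs.le,
    ← ofReal_add (by positivity) (by positivity),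
    ofReal_eq_ofReal_iff (by positivity) (by positivity),
    ofReal_eq_ofReal_iff a.coe_nonneg b.coe_nonneg]
  exact Real.geom_mean_eq_arith_mean2_weighted_iff_of_pos ht hs a.coe_nonneg b.coe_nonneg hts

theorem eq_rpow_inv_mul_of_rpow_eq {p : ℝ} (hp : 0 < p) {a b c : ℝ≥0∞} (h : a ^ p = c * b ^ p) :
    a = c ^ p⁻¹ * b := by
  rw [← rpow_rpow_inv hp.ne' a, h, mul_rpow_of_nonneg _ _ (inv_nonneg.2 hp.le),
    rpow_rpow_inv hp.ne']

end ENNReal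

namespace MeasureTheory

variable {X : Type*} [MeasurableSpace X] {μ : Measure X}

theorem ae_eq_of_lintegral_rpow_mul_rpow_eq_one {φ ψ : X → ℝ≥0∞} (hφ : AEMeasurable φ μ)
    (hψ : AEMeasurable ψ μ) (hφ1 : ∫⁻ x, φ x ∂μ = 1) (hψ1 : ∫⁻ x, ψ x ∂μ = 1) {t s : ℝ}
    (ht : 0 < t) (hs : 0 < s) (hts : t + s = 1) (h : ∫⁻ x, φ x ^ t * ψ x ^ s ∂μ = 1) :
    φ =ᵐ[μ] ψ := by
  have hφfin : ∀ᵐ x ∂μ, φ x < ∞ := ae_lt_top' hφ (by simp [hφ1])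
  have hψfin : ∀ᵐ x ∂μ, ψ x < ∞ := ae_lt_top' hψ (by simp [hψ1])
  have hle : (fun x ↦ φ x ^ t * ψ x ^ s) ≤ᵐ[μ]
      fun x ↦ ENNReal.ofReal t * φ x + ENNReal.ofReal s * ψ x := by
    filter_upwards [hφfin, hψfin] with x hφx hψx
    exact ENNReal.geom_mean_le_arith_mean2_weighted ht.le hs.le hts hφx.ne hψx.ne
  have hmean : ∫⁻ x, ENNReal.ofReal t * φ x + ENNReal.ofReal s * ψ x ∂μ = 1 := by
    rw [lintegral_add_left' (hφ.const_mul _), lintegral_const_mul'' _ hφ,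
      lintegral_const_mul'' _ hψ, hφ1, hψ1, mul_one, mul_one, ← ENNReal.ofReal_add ht.le hs.le,
      hts, ENNReal.ofReal_one]
  have heq := ae_eq_of_ae_le_of_lintegral_le hle (by simp [h])
    ((hφ.const_mul _).add (hψ.const_mul _)) (by rw [h, hmean])
  filter_upwards [heq, hφfin, hψfin] with x hx hφx hψx
  exact (ENNReal.geom_mean_eq_arith_mean2_weighted_iff_of_pos ht hs hts hφx.ne hψx.ne).1 hx

-- The equality case of Hölder's inequality `ENNReal.lintegral_mul_norm_pow_le`.
theorem ae_eq_const_mul_of_lintegral_rpow_mul_rpow_eq {φ ψ : X → ℝ≥0∞} (hφ : AEMeasurable φ μ)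
    (hψ : AEMeasurable ψ μ) (hφ0 : ∫⁻ x, φ x ∂μ ≠ 0) (hφtop : ∫⁻ x, φ x ∂μ ≠ ∞)
    (hψ0 : ∫⁻ x, ψ x ∂μ ≠ 0) (hψtop : ∫⁻ x, ψ x ∂μ ≠ ∞) {t s : ℝ} (ht : 0 < t) (hs : 0 < s)
    (hts : t + s = 1)
    (h : ∫⁻ x, φ x ^ t * ψ x ^ s ∂μ = (∫⁻ x, φ x ∂μ) ^ t * (∫⁻ x, ψ x ∂μ) ^ s) :
    φ =ᵐ[μ] fun x ↦ (∫⁻ x, φ x ∂μ) / (∫⁻ x, ψ x ∂μ) * ψ x := by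
  set F := ∫⁻ x, φ x ∂μ
  set G := ∫⁻ x, ψ x ∂μ
  have hnorm : ∫⁻ x, (φ x / F) ^ t * (ψ x / G) ^ s ∂μ = 1 := by
    have hFG0 : F ^ t * G ^ s ≠ 0 := by positivity
    have hFGtop : F ^ t * G ^ s ≠ ∞ := by finiteness
    have hpt : ∀ x, (φ x / F) ^ t * (ψ x / G) ^ s = φ x ^ t * ψ x ^ s * (F ^ t * G ^ s)⁻¹ := by
      intro x
      rw [ENNReal.div_rpow_of_nonneg _ _ ht.le, ENNReal.div_rpow_of_nonneg _ _ hs.le,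
        div_eq_mul_inv, div_eq_mul_inv,
        ENNReal.mul_inv (.inl (by positivity)) (.inl (by finiteness))]
      ring
    rw [lintegral_congr hpt, lintegral_mul_const' _ _ (ENNReal.inv_ne_top.2 hFG0), h,
      ENNReal.mul_inv_cancel hFG0 hFGtop]
  have hφ1 : ∫⁻ x, φ x / F ∂μ = 1 := by
    simp_rw [div_eq_mul_inv]
    rw [lintegral_mul_const'' _ hφ, ENNReal.mul_inv_cancel hφ0 hφtop]
  have hψ1 : ∫⁻ x, ψ x / G ∂μ = 1 := by
    simp_rw [div_eq_mul_inv]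
    rw [lintegral_mul_const'' _ hψ, ENNReal.mul_inv_cancel hψ0 hψtop]
  filter_upwards [ae_eq_of_lintegral_rpow_mul_rpow_eq_one (hφ.div_const F) (hψ.div_const G)
    hφ1 hψ1 ht hs hts hnorm] with x hx
  rw [← ENNReal.div_mul_cancel hφ0 hφtop (b := φ x), hx, div_eq_mul_inv, div_eq_mul_inv]
  ring

theorem ae_eq_of_ae_eq_const_mul_of_lintegral_eq {f g : X → ℝ≥0∞} (hg : AEMeasurable g μ)
    {c : ℝ≥0∞} (hfg : f =ᵐ[μ] fun x ↦ c * g x) (hint : ∫⁻ x, f x ∂μ = ∫⁻ x, g x ∂μ)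
    (hg0 : ∫⁻ x, g x ∂μ ≠ 0) (hgtop : ∫⁻ x, g x ∂μ ≠ ∞) : f =ᵐ[μ] g := by
  have hc : c = 1 := by
    refine (ENNReal.mul_left_inj hg0 hgtop).1 ?_
    rw [← lintegral_const_mul'' c hg, ← lintegral_congr_ae hfg, hint, one_mul]
  filter_upwards [hfg] with x hx
  rw [hx, hc, one_mul]

theorem ae_eq_of_lintegral_rpow_mul_rpow_eq_of_lintegral_eq_one {f g : X → ℝ≥0∞}
    (hf : AEMeasurable f μ) (hg : AEMeasurable g μ) (hf1 : ∫⁻ x, f x ∂μ = 1)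
    (hg1 : ∫⁻ x, g x ∂μ = 1) {p t s : ℝ} (hp : 0 < p)
    (hF0 : ∫⁻ x, f x ^ p ∂μ ≠ 0) (hFtop : ∫⁻ x, f x ^ p ∂μ ≠ ∞)
    (hG0 : ∫⁻ x, g x ^ p ∂μ ≠ 0) (hGtop : ∫⁻ x, g x ^ p ∂μ ≠ ∞)
    (ht : 0 < t) (hs : 0 < s) (hts : t + s = 1)
    (h : ∫⁻ x, (f x ^ p) ^ t * (g x ^ p) ^ s ∂μ =
      (∫⁻ x, f x ^ p ∂μ) ^ t * (∫⁻ x, g x ^ p ∂μ) ^ s) :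
    f =ᵐ[μ] g := by
  have hprop := ae_eq_const_mul_of_lintegral_rpow_mul_rpow_eq (hf.pow_const p) (hg.pow_const p)
    hF0 hFtop hG0 hGtop ht hs hts h
  exact ae_eq_of_ae_eq_const_mul_of_lintegral_eq hg
    (hprop.mono fun x hx ↦ ENNReal.eq_rpow_inv_mul_of_rpow_eq hp hx) (hf1.trans hg1.symm)
    (by simp [hg1]) (by simp [hg1])

end MeasureTheory

theorem LSD_eq_zero_iff_lintegral_eq_rpow_mul_rpow {X : Type*} [MeasurableSpace X]
    {μ : Measure X} {β A B : ℝ} {g f : X → ℝ≥0} (hA : A ≠ 0) (hB : B ≠ 0) (hβ : 1 + β ≠ 0)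
    (hF0 : ∫⁻ x, (f x : ℝ≥0∞) ^ (1 + β) ∂μ ≠ 0) (hFtop : ∫⁻ x, (f x : ℝ≥0∞) ^ (1 + β) ∂μ ≠ ∞)
    (hG0 : ∫⁻ x, (g x : ℝ≥0∞) ^ (1 + β) ∂μ ≠ 0) (hGtop : ∫⁻ x, (g x : ℝ≥0∞) ^ (1 + β) ∂μ ≠ ∞)
    (hM0 : ∫⁻ x, (f x : ℝ≥0∞) ^ B * (g x : ℝ≥0∞) ^ A ∂μ ≠ 0)
    (hMtop : ∫⁻ x, (f x : ℝ≥0∞) ^ B * (g x : ℝ≥0∞) ^ A ∂μ ≠ ∞) :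
    LSD μ β A B g f = 0 ↔ ∫⁻ x, (f x : ℝ≥0∞) ^ B * (g x : ℝ≥0∞) ^ A ∂μ =
      (∫⁻ x, (f x : ℝ≥0∞) ^ (1 + β) ∂μ) ^ (B / (1 + β)) *
        (∫⁻ x, (g x : ℝ≥0∞) ^ (1 + β) ∂μ) ^ (A / (1 + β)) := by
  rw [LSD, log_combination_eq_zero_iff hA hB hβ (ENNReal.toReal_pos hF0 hFtop)
    (ENNReal.toReal_pos hG0 hGtop) (ENNReal.toReal_pos hM0 hMtop), ENNReal.toReal_rpow,
    ENNReal.toReal_rpow, ← ENNReal.toReal_mul, ENNReal.toReal_eq_toReal_iff' hMtop (by finiteness)]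

theorem lsd_eq_zero_iff_general {X : Type*} [MeasurableSpace X] (μ : Measure X)
    (g f : X → ℝ≥0) (hg : Measurable g) (hf : Measurable f)
    (hg1 : ∫⁻ x, (g x : ℝ≥0∞) ∂μ = 1) (hf1 : ∫⁻ x, (f x : ℝ≥0∞) ∂μ = 1)
    (β A B : ℝ) (hA : 0 < A) (hB : 0 < B) (hAB : A + B = 1 + β)
    (hfint : 0 < ∫⁻ x, (f x : ℝ≥0∞) ^ (1 + β) ∂μ)
    (hfint' : ∫⁻ x, (f x : ℝ≥0∞) ^ (1 + β) ∂μ < ∞)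
    (hgint : 0 < ∫⁻ x, (g x : ℝ≥0∞) ^ (1 + β) ∂μ)
    (hgint' : ∫⁻ x, (g x : ℝ≥0∞) ^ (1 + β) ∂μ < ∞)
    (hfg : 0 < ∫⁻ x, (f x : ℝ≥0∞) ^ B * (g x : ℝ≥0∞) ^ A ∂μ)
    (hfg' : ∫⁻ x, (f x : ℝ≥0∞) ^ B * (g x : ℝ≥0∞) ^ A ∂μ < ∞) :
    LSD μ β A B g f = 0 ↔ f =ᵐ[μ] g := by
  have hp : 0 < 1 + β := hAB ▸ add_pos hA hB
  have ht : 0 < B / (1 + β) := div_pos hB hp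
  have hs : 0 < A / (1 + β) := div_pos hA hp
  have hts : B / (1 + β) + A / (1 + β) = 1 := by rw [← add_div, add_comm, hAB, div_self hp.ne']
  rw [LSD_eq_zero_iff_lintegral_eq_rpow_mul_rpow hA.ne' hB.ne' hp.ne' hfint.ne' hfint'.ne
    hgint.ne' hgint'.ne hfg.ne' hfg'.ne]
  constructor
  · intro h
    refine (ae_eq_of_lintegral_rpow_mul_rpow_eq_of_lintegral_eq_one
      hf.coe_nnreal_ennreal.aemeasurable hg.coe_nnreal_ennreal.aemeasurable hf1 hg1 hp
      hfint.ne' hfint'.ne hgint.ne' hgint'.ne ht hs hts ?_).mono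
      fun x hx ↦ ENNReal.coe_injective hx
    simpa only [← ENNReal.rpow_mul, mul_div_cancel₀ _ hp.ne'] using h
  · intro h
    have hF : ∫⁻ x, (f x : ℝ≥0∞) ^ (1 + β) ∂μ = ∫⁻ x, (g x : ℝ≥0∞) ^ (1 + β) ∂μ :=
      lintegral_congr_ae (h.mono fun x hx ↦ by simp only [hx])
    have hM : ∫⁻ x, (f x : ℝ≥0∞) ^ B * (g x : ℝ≥0∞) ^ A ∂μ =
        ∫⁻ x, (g x : ℝ≥0∞) ^ (1 + β) ∂μ :=
      lintegral_congr_ae (h.mono fun x hx ↦ by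
        dsimp only
        rw [hx, ← ENNReal.rpow_add_of_nonneg _ _ hB.le hA.le, add_comm, hAB])
    rw [hM, hF, ← ENNReal.rpow_add_of_nonneg _ _ ht.le hs.le, hts, ENNReal.rpow_one]

/-- Equality part of Theorem 1: for `A, B > 0` with `A + B = 1 + β`, the
logarithmic S-divergence vanishes if and only if `f = g` μ-a.e. -/
theorem lsd_eq_zero_iff {X : Type*} [MeasurableSpace X] (μ : Measure X)
    (g f : X → ℝ≥0) (hg : Measurable g) (hf : Measurable f)
    (hg1 : ∫⁻ x, (g x : ℝ≥0∞) ∂μ = 1) (hf1 : ∫⁻ x, (f x : ℝ≥0∞) ∂μ = 1)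
    (β A B : ℝ) (hβ : 0 < β) (hA : 0 < A) (hB : 0 < B) (hAB : A + B = 1 + β)
    (hfint : 0 < ∫⁻ x, (f x : ℝ≥0∞) ^ (1 + β) ∂μ)
    (hfint' : ∫⁻ x, (f x : ℝ≥0∞) ^ (1 + β) ∂μ < ∞)
    (hgint : 0 < ∫⁻ x, (g x : ℝ≥0∞) ^ (1 + β) ∂μ)
    (hgint' : ∫⁻ x, (g x : ℝ≥0∞) ^ (1 + β) ∂μ < ∞)
    (hfg : 0 < ∫⁻ x, (f x : ℝ≥0∞) ^ B * (g x : ℝ≥0∞) ^ A ∂μ)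
    (hfg' : ∫⁻ x, (f x : ℝ≥0∞) ^ B * (g x : ℝ≥0∞) ^ A ∂μ < ∞) :
    LSD μ β A B g f = 0 ↔ f =ᵐ[μ] g :=
  lsd_eq_zero_iff_general μ g f hg hf hg1 hf1 β A B hA hB hAB hfint hfint' hgint hgint' hfg hfg'
end

section
/- Let (X, μ) be a measure space and let g, f : X → [0,∞) be measurable with ∫ g dμ = ∫ f dμ = 1. For β > 0, if ∫ f^{1+β} dμ, ∫ g^{1+β} dμ and ∫ f^β g dμ are finite and strictly positive, then the logarithmic density power divergence LDPD_β(g,f) = log(∫ f^{1+β} dμ) − (1 + 1/β)·log(∫ f^β g dμ) + (1/β)·log(∫ g^{1+β} dμ) ≥ 0, with equality if and only if f = g μ-almost everywhere. -/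
open MeasureTheory
open scoped ENNReal NNReal

/-!
Hölder's inequality with the conjugate exponents `1 + 1/β` and `1 + β`, applied to `f^β` and `g`,
reads `∫ f^β g ≤ (∫ f^{1+β})^{β/(1+β)} (∫ g^{1+β})^{1/(1+β)}`, and `LDPD_β(g, f)` is `1 + 1/β`
times the logarithm of the ratio of the two sides, hence nonnegative. It vanishes exactly in the
equality case of Hölder, i.e. when `f^{1+β} / ∫ f^{1+β} = g^{1+β} / ∫ g^{1+β}` a.e.; then `f` is a
constant multiple of `g`, and `∫ f = ∫ g = 1` forces the constant to be `1`.
-/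

namespace ENNReal

variable {α : Type*} [MeasurableSpace α] {μ : Measure α} {p q : ℝ}

theorem ae_rpow_eq_of_lintegral_mul_eq_one (hpq : p.HolderConjugate q) {f g : α → ℝ≥0∞}
    (hf : AEMeasurable f μ) (hg : AEMeasurable g μ) (hf_norm : ∫⁻ a, f a ^ p ∂μ = 1)
    (hg_norm : ∫⁻ a, g a ^ q ∂μ = 1) (hfg : ∫⁻ a, f a * g a ∂μ = 1) :
    ∀ᵐ a ∂μ, f a ^ p = g a ^ q := by
  -- Young's inequality `f g ≤ f^p/p + g^q/q` integrates to `1 ≤ 1`, so it holds with equality a.e.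
  set F := fun a => f a ^ p / ENNReal.ofReal p + g a ^ q / ENNReal.ofReal q
  have hF_meas : AEMeasurable F μ :=
    ((hf.pow_const p).div_const _).add ((hg.pow_const q).div_const _)
  have hF : ∫⁻ a, F a ∂μ = 1 := by
    simp only [F, div_eq_mul_inv]
    rw [lintegral_add_left' ((hf.pow_const p).mul_const _),
      lintegral_mul_const'' _ (hf.pow_const p), lintegral_mul_const'' _ (hg.pow_const q), hf_norm, hg_norm, one_mul, one_mul,
      hpq.inv_add_inv_ennreal]
  have hyoung : ∀ᵐ a ∂μ, f a * g a = F a :=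
    ae_eq_of_ae_le_of_lintegral_le (ae_of_all _ fun a => young_inequality _ _ hpq)
      (by simp [hfg]) hF_meas (by rw [hF, hfg])
  have hf_fin := ae_lt_top' (hf.pow_const p) (by simp [hf_norm])
  have hg_fin := ae_lt_top' (hg.pow_const q) (by simp [hg_norm])
  filter_upwards [hyoung, hf_fin, hg_fin] with a ha hfa hga
  rcases (young_inequality_eq_iff _ _ hpq).1 ha with ⟨hf_top, -⟩ | ⟨-, hg_top⟩ | h
  · simp [hf_top, hpq.pos] at hfa
  · simp [hg_top, hpq.symm.pos] at hga
  · exact h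

theorem ae_rpow_mul_inv_eq_of_lintegral_mul_eq (hpq : p.HolderConjugate q) {f g : α → ℝ≥0∞}
    (hf : AEMeasurable f μ) (hg : AEMeasurable g μ)
    (hf_ne_zero : ∫⁻ a, f a ^ p ∂μ ≠ 0) (hf_ne_top : ∫⁻ a, f a ^ p ∂μ ≠ ⊤)
    (hg_ne_zero : ∫⁻ a, g a ^ q ∂μ ≠ 0) (hg_ne_top : ∫⁻ a, g a ^ q ∂μ ≠ ⊤)
    (hfg : ∫⁻ a, f a * g a ∂μ = (∫⁻ a, f a ^ p ∂μ) ^ (1 / p) * (∫⁻ a, g a ^ q ∂μ) ^ (1 / q)) :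
    ∀ᵐ a ∂μ, f a ^ p * (∫⁻ c, f c ^ p ∂μ)⁻¹ = g a ^ q * (∫⁻ c, g c ^ q ∂μ)⁻¹ := by
  set Nf := (∫⁻ a, f a ^ p ∂μ) ^ (1 / p)
  set Ng := (∫⁻ a, g a ^ q ∂μ) ^ (1 / q)
  have hNf : Nf ≠ 0 := by simp [Nf, hf_ne_zero, hf_ne_top, hpq.pos]
  have hNg : Ng ≠ 0 := by simp [Ng, hg_ne_zero, hg_ne_top, hpq.symm.pos]
  have hNf' : Nf ≠ ⊤ := by simp [Nf, hf_ne_zero, hf_ne_top, hpq.pos]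
  have hNg' : Ng ≠ ⊤ := by simp [Ng, hg_ne_zero, hg_ne_top, hpq.symm.pos]
  have hnorm : ∫⁻ a, funMulInvSnorm f p μ a * funMulInvSnorm g q μ a ∂μ = 1 := by
    calc ∫⁻ a, funMulInvSnorm f p μ a * funMulInvSnorm g q μ a ∂μ
        = ∫⁻ a, f a * g a * (Nf * Ng)⁻¹ ∂μ := by
          refine lintegral_congr fun a => ?_
          rw [funMulInvSnorm, funMulInvSnorm, ENNReal.mul_inv (.inl hNf) (.inl hNf')]
          ring
      _ = 1 := by
        rw [lintegral_mul_const' _ _ (by simp [hNf, hNg]), hfg,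
          ENNReal.mul_inv_cancel (mul_ne_zero hNf hNg) (mul_ne_top hNf' hNg')]
  filter_upwards [ae_rpow_eq_of_lintegral_mul_eq_one (f := funMulInvSnorm f p μ)
    (g := funMulInvSnorm g q μ) hpq (hf.mul_const _) (hg.mul_const _)
    (lintegral_rpow_funMulInvSnorm_eq_one hpq.pos hf_ne_zero hf_ne_top)
    (lintegral_rpow_funMulInvSnorm_eq_one hpq.symm.pos hg_ne_zero hg_ne_top) hnorm] with a ha
  rwa [funMulInvSnorm_rpow hpq.pos, funMulInvSnorm_rpow hpq.symm.pos] at ha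

theorem mul_rpow_inv_eq_of_rpow_mul_eq {r : ℝ} (hr : 0 < r) {a b c d : ℝ≥0∞}
    (h : a ^ r * c = b ^ r * d) : a * c ^ r⁻¹ = b * d ^ r⁻¹ := by
  have := congrArg (· ^ r⁻¹) h
  simpa only [mul_rpow_of_nonneg _ _ (inv_nonneg.2 hr.le), ← rpow_mul, mul_inv_cancel₀ hr.ne',
    rpow_one] using this

end ENNReal

namespace MeasureTheory

variable {α : Type*} [MeasurableSpace α] {μ : Measure α}

theorem ae_eq_of_ae_mul_const_eq_of_lintegral_eq {f g : α → ℝ≥0∞} {c d : ℝ≥0∞}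
    (h : ∀ᵐ a ∂μ, f a * c = g a * d) (hc_ne_zero : c ≠ 0) (hc_ne_top : c ≠ ⊤) (hd_ne_top : d ≠ ⊤)
    (hfg : ∫⁻ a, f a ∂μ = ∫⁻ a, g a ∂μ) (hg_ne_zero : ∫⁻ a, g a ∂μ ≠ 0)
    (hg_ne_top : ∫⁻ a, g a ∂μ ≠ ⊤) : f =ᵐ[μ] g := by
  have hcd : c = d := by
    have := lintegral_congr_ae h
    rwa [lintegral_mul_const' _ _ hc_ne_top, lintegral_mul_const' _ _ hd_ne_top, hfg,
      ENNReal.mul_right_inj hg_ne_zero hg_ne_top] at this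
  filter_upwards [h] with a ha
  rwa [← hcd, ENNReal.mul_left_inj hc_ne_zero hc_ne_top] at ha

end MeasureTheory

theorem Real.holderConjugate_one_add_one_div_one_add {β : ℝ} (hβ : 0 < β) :
    (1 + 1 / β).HolderConjugate (1 + β) := by
  rw [Real.holderConjugate_iff]
  refine ⟨by simp [hβ], ?_⟩
  field_simp
  ring

theorem ENNReal.rpow_rpow_one_add_one_div {β : ℝ} (hβ : 0 < β) (x : ℝ≥0∞) :
    (x ^ β) ^ (1 + 1 / β) = x ^ (1 + β) := by
  rw [← ENNReal.rpow_mul]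
  congr 1
  field_simp
  ring

theorem Real.log_sub_mul_log_add_mul_log_eq {β a b : ℝ} (hβ : 0 < β) (ha : 0 < a) (hb : 0 < b)
    (c : ℝ) :
    log a - (1 + 1 / β) * log c + 1 / β * log b =
      (1 + 1 / β) * (log (a ^ (1 / (1 + 1 / β)) * b ^ (1 / (1 + β))) - log c) := by
  rw [log_mul (rpow_pos_of_pos ha _).ne' (rpow_pos_of_pos hb _).ne', log_rpow ha, log_rpow hb]
  field_simp
  ring

section HolderPair

variable {α : Type*} [MeasurableSpace α] {μ : Measure α} {β : ℝ} {f g : α → ℝ≥0∞}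

theorem ENNReal.lintegral_rpow_mul_le (hβ : 0 < β) (hf : AEMeasurable f μ)
    (hg : AEMeasurable g μ) :
    ∫⁻ a, f a ^ β * g a ∂μ ≤
      (∫⁻ a, f a ^ (1 + β) ∂μ) ^ (1 / (1 + 1 / β)) * (∫⁻ a, g a ^ (1 + β) ∂μ) ^ (1 / (1 + β)) := by
  simpa only [Pi.mul_apply, ENNReal.rpow_rpow_one_add_one_div hβ] using
    ENNReal.lintegral_mul_le_Lp_mul_Lq μ (Real.holderConjugate_one_add_one_div_one_add hβ)
      (hf.pow_const β) hg

theorem MeasureTheory.ae_eq_of_lintegral_rpow_mul_eq (hβ : 0 < β) (hf : AEMeasurable f μ)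
    (hg : AEMeasurable g μ)
    (hf_ne_zero : ∫⁻ a, f a ^ (1 + β) ∂μ ≠ 0) (hf_ne_top : ∫⁻ a, f a ^ (1 + β) ∂μ ≠ ⊤)
    (hg_ne_zero : ∫⁻ a, g a ^ (1 + β) ∂μ ≠ 0) (hg_ne_top : ∫⁻ a, g a ^ (1 + β) ∂μ ≠ ⊤)
    (hfg : ∫⁻ a, f a ∂μ = ∫⁻ a, g a ∂μ) (hg_int_ne_zero : ∫⁻ a, g a ∂μ ≠ 0)
    (hg_int_ne_top : ∫⁻ a, g a ∂μ ≠ ⊤)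
    (h_eq : ∫⁻ a, f a ^ β * g a ∂μ =
      (∫⁻ a, f a ^ (1 + β) ∂μ) ^ (1 / (1 + 1 / β)) * (∫⁻ a, g a ^ (1 + β) ∂μ) ^ (1 / (1 + β))) :
    f =ᵐ[μ] g := by
  set A := ∫⁻ a, f a ^ (1 + β) ∂μ
  set B := ∫⁻ a, g a ^ (1 + β) ∂μ
  have hA : ∫⁻ a, (f a ^ β) ^ (1 + 1 / β) ∂μ = A := by
    simp only [ENNReal.rpow_rpow_one_add_one_div hβ, A]
  have h_pow := ENNReal.ae_rpow_mul_inv_eq_of_lintegral_mul_eq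
    (Real.holderConjugate_one_add_one_div_one_add hβ) (hf.pow_const β) hg
    (by rwa [hA]) (by rwa [hA]) hg_ne_zero hg_ne_top (by rwa [hA])
  simp only [ENNReal.rpow_rpow_one_add_one_div hβ] at h_pow
  refine ae_eq_of_ae_mul_const_eq_of_lintegral_eq (c := A⁻¹ ^ (1 + β)⁻¹) (d := B⁻¹ ^ (1 + β)⁻¹)
    ?_ ?_ ?_ ?_ hfg hg_int_ne_zero hg_int_ne_top
  · filter_upwards [h_pow] with a ha
    exact ENNReal.mul_rpow_inv_eq_of_rpow_mul_eq (by linarith) ha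
  · exact (ENNReal.rpow_pos (ENNReal.inv_pos.2 hf_ne_top) (ENNReal.inv_ne_top.2 hf_ne_zero)).ne'
  · exact ENNReal.rpow_ne_top_of_nonneg (by positivity) (ENNReal.inv_ne_top.2 hf_ne_zero)
  · exact ENNReal.rpow_ne_top_of_nonneg (by positivity) (ENNReal.inv_ne_top.2 hg_ne_zero)

end HolderPair

theorem ldpd_nonneg_eq_zero_iff_general {X : Type*} [MeasurableSpace X] (μ : Measure X)
    (g f : X → ℝ≥0) (hg : Measurable g) (hf : Measurable f)
    (hg1 : ∫⁻ x, (g x : ℝ≥0∞) ∂μ = 1) (hf1 : ∫⁻ x, (f x : ℝ≥0∞) ∂μ = 1)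
    (β : ℝ) (hβ : 0 < β)
    (hfint : 0 < ∫⁻ x, (f x : ℝ≥0∞) ^ (1 + β) ∂μ)
    (hfint' : ∫⁻ x, (f x : ℝ≥0∞) ^ (1 + β) ∂μ < ∞)
    (hgint : 0 < ∫⁻ x, (g x : ℝ≥0∞) ^ (1 + β) ∂μ)
    (hgint' : ∫⁻ x, (g x : ℝ≥0∞) ^ (1 + β) ∂μ < ∞)
    (hfg : 0 < ∫⁻ x, (f x : ℝ≥0∞) ^ β * (g x : ℝ≥0∞) ∂μ) :
    let L : ℝ :=
      Real.log (∫⁻ x, (f x : ℝ≥0∞) ^ (1 + β) ∂μ).toReal -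
        (1 + 1 / β) * Real.log (∫⁻ x, (f x : ℝ≥0∞) ^ β * (g x : ℝ≥0∞) ∂μ).toReal +
        (1 / β) * Real.log (∫⁻ x, (g x : ℝ≥0∞) ^ (1 + β) ∂μ).toReal
    0 ≤ L ∧ (L = 0 ↔ f =ᵐ[μ] g) := by
  intro L
  have hmf := hf.coe_nnreal_ennreal.aemeasurable (μ := μ)
  have hmg := hg.coe_nnreal_ennreal.aemeasurable (μ := μ)
  set A := ∫⁻ x, (f x : ℝ≥0∞) ^ (1 + β) ∂μ
  set B := ∫⁻ x, (g x : ℝ≥0∞) ^ (1 + β) ∂μ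
  set C := ∫⁻ x, (f x : ℝ≥0∞) ^ β * (g x : ℝ≥0∞) ∂μ
  set H := A ^ (1 / (1 + 1 / β)) * B ^ (1 / (1 + β))
  have hCH : C ≤ H := ENNReal.lintegral_rpow_mul_le hβ hmf hmg
  have hH_ne_top : H ≠ ⊤ := ENNReal.mul_ne_top
    (ENNReal.rpow_ne_top_of_nonneg (by positivity) hfint'.ne)
    (ENNReal.rpow_ne_top_of_nonneg (by positivity) hgint'.ne)
  have hC_pos : 0 < C.toReal := ENNReal.toReal_pos hfg.ne' (hCH.trans_lt hH_ne_top.lt_top).ne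
  have hH_pos : 0 < H.toReal := hC_pos.trans_le (ENNReal.toReal_mono hH_ne_top hCH)
  have hL : L = (1 + 1 / β) * (Real.log H.toReal - Real.log C.toReal) := by
    rw [ENNReal.toReal_mul, ← ENNReal.toReal_rpow, ← ENNReal.toReal_rpow]
    exact Real.log_sub_mul_log_add_mul_log_eq hβ (ENNReal.toReal_pos hfint.ne' hfint'.ne)
      (ENNReal.toReal_pos hgint.ne' hgint'.ne) _
  refine ⟨?_, fun hL0 => ?_, fun hfg_ae => ?_⟩
  · rw [hL]
    exact mul_nonneg (by positivity)
      (sub_nonneg.2 (Real.log_le_log hC_pos (ENNReal.toReal_mono hH_ne_top hCH)))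
  · have hCH_eq : C = H := by
      rw [hL, mul_eq_zero, sub_eq_zero] at hL0
      have hlog := hL0.resolve_left (by positivity)
      exact (ENNReal.toReal_eq_toReal_iff' (hCH.trans_lt hH_ne_top.lt_top).ne hH_ne_top).1
        (Real.log_injOn_pos hC_pos hH_pos hlog.symm)
    filter_upwards [ae_eq_of_lintegral_rpow_mul_eq hβ hmf hmg hfint.ne' hfint'.ne hgint.ne'
      hgint'.ne (hf1.trans hg1.symm) (by simp [hg1]) (by simp [hg1]) hCH_eq] with x hx
    exact ENNReal.coe_inj.1 hx
  · have hB : B = A := lintegral_congr_ae (by filter_upwards [hfg_ae] with x hx; rw [hx])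
    have hC : C = A := lintegral_congr_ae (by
      filter_upwards [hfg_ae] with x hx
      rw [hx, ENNReal.rpow_add_of_nonneg _ _ zero_le_one hβ.le, ENNReal.rpow_one, mul_comm])
    change Real.log A.toReal - (1 + 1 / β) * Real.log C.toReal + 1 / β * Real.log B.toReal = 0
    rw [hB, hC]
    ring

/-- The logarithmic density power divergence
`LDPD_β(g,f) = log ∫ f^{1+β} − (1 + 1/β)·log ∫ f^β g + (1/β)·log ∫ g^{1+β}`
is nonnegative for `β > 0`, with equality iff `f = g` μ-a.e. -/
theorem ldpd_nonneg_eq_zero_iff {X : Type*} [MeasurableSpace X] (μ : Measure X)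
    (g f : X → ℝ≥0) (hg : Measurable g) (hf : Measurable f)
    (hg1 : ∫⁻ x, (g x : ℝ≥0∞) ∂μ = 1) (hf1 : ∫⁻ x, (f x : ℝ≥0∞) ∂μ = 1)
    (β : ℝ) (hβ : 0 < β)
    (hfint : 0 < ∫⁻ x, (f x : ℝ≥0∞) ^ (1 + β) ∂μ)
    (hfint' : ∫⁻ x, (f x : ℝ≥0∞) ^ (1 + β) ∂μ < ∞)
    (hgint : 0 < ∫⁻ x, (g x : ℝ≥0∞) ^ (1 + β) ∂μ)
    (hgint' : ∫⁻ x, (g x : ℝ≥0∞) ^ (1 + β) ∂μ < ∞)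
    (hfg : 0 < ∫⁻ x, (f x : ℝ≥0∞) ^ β * (g x : ℝ≥0∞) ∂μ)
    (hfg' : ∫⁻ x, (f x : ℝ≥0∞) ^ β * (g x : ℝ≥0∞) ∂μ < ∞) :
    let L : ℝ :=
      Real.log (∫⁻ x, (f x : ℝ≥0∞) ^ (1 + β) ∂μ).toReal -
        (1 + 1 / β) * Real.log (∫⁻ x, (f x : ℝ≥0∞) ^ β * (g x : ℝ≥0∞) ∂μ).toReal +
        (1 / β) * Real.log (∫⁻ x, (g x : ℝ≥0∞) ^ (1 + β) ∂μ).toReal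
    0 ≤ L ∧ (L = 0 ↔ f =ᵐ[μ] g) :=
  ldpd_nonneg_eq_zero_iff_general μ g f hg hf hg1 hf1 β hβ hfint hfint' hgint hgint' hfg
end

section
/- Let X be a nonempty finite set and let g, f : X → ℝ be strictly positive with Σ_{x∈X} g(x) = Σ_{x∈X} f(x) = 1. Then the logarithmic power divergence converges to the likelihood disparity as γ → 0: the function γ ↦ (1/(γ(γ+1)))·log( Σ_{x∈X} g(x)^{1+γ} f(x)^{−γ} ), defined for γ ≠ 0, tends to Σ_{x∈X} g(x)·log(g(x)/f(x)) as γ → 0. -/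
open Filter
open scoped Topology BigOperators

/-!
Write `S γ = ∑ g^(1+γ) f^(-γ)`. Then `S 0 = ∑ g = 1` and `S'(0) = ∑ g log (g / f)`, so
`log S γ / γ` is a difference quotient of `log ∘ S` at `0` and tends to the likelihood disparity,
while the remaining factor `1 / (γ + 1)` tends to `1`.
-/

theorem Real.rpow_one_add_mul_rpow_neg {a b : ℝ} (ha : 0 < a) (hb : 0 < b) (γ : ℝ) :
    a ^ (1 + γ) * b ^ (-γ) = a * (a / b) ^ γ := by
  rw [Real.rpow_add ha, Real.rpow_one, Real.rpow_neg hb.le, Real.div_rpow ha.le hb.le,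
    div_eq_mul_inv, mul_assoc]

theorem hasDerivAt_rpow_one_add_mul_rpow_neg {a b : ℝ} (ha : 0 < a) (hb : 0 < b) :
    HasDerivAt (fun γ : ℝ => a ^ (1 + γ) * b ^ (-γ)) (a * Real.log (a / b)) 0 := by
  have hab : HasDerivAt (fun γ : ℝ => a * (a / b) ^ γ) (a * Real.log (a / b)) 0 := by
    simpa using ((Real.hasStrictDerivAt_const_rpow (div_pos ha hb) 0).hasDerivAt).const_mul a
  simpa only [Real.rpow_one_add_mul_rpow_neg ha hb] using hab

theorem tendsto_inv_mul_of_hasDerivAt_zero {F : ℝ → ℝ} {L : ℝ} (hF : HasDerivAt F L 0)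
    (hF0 : F 0 = 0) : Tendsto (fun γ => γ⁻¹ * F γ) (𝓝[≠] 0) (𝓝 L) := by
  simpa [hF0] using hasDerivAt_iff_tendsto_slope_zero.mp hF

theorem tendsto_log_div_mul_add_one_of_hasDerivAt {S : ℝ → ℝ} {L : ℝ} (hS : HasDerivAt S L 0)
    (hS0 : S 0 = 1) :
    Tendsto (fun γ => 1 / (γ * (γ + 1)) * Real.log (S γ)) (𝓝[≠] 0) (𝓝 L) := by
  have hlog : Tendsto (fun γ => γ⁻¹ * Real.log (S γ)) (𝓝[≠] 0) (𝓝 L) := by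
    refine tendsto_inv_mul_of_hasDerivAt_zero ?_ (by simp [hS0])
    simpa [hS0] using hS.log (by simp [hS0])
  have hinv : Tendsto (fun γ : ℝ => (γ + 1)⁻¹) (𝓝[≠] 0) (𝓝 1) := by
    have hcont : ContinuousAt (fun γ : ℝ => (γ + 1)⁻¹) 0 := by fun_prop (disch := norm_num)
    simpa using hcont.tendsto.mono_left nhdsWithin_le_nhds
  refine (mul_one L ▸ hlog.mul hinv).congr fun γ => ?_
  rw [one_div, mul_inv]
  ring

theorem lpd_tendsto_likelihood_disparity_general {X : Type*} [Fintype X]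
    (g f : X → ℝ) (hg : ∀ x, 0 < g x) (hf : ∀ x, 0 < f x)
    (hgs : ∑ x, g x = 1) :
    Tendsto
      (fun γ : ℝ => (1 / (γ * (γ + 1))) * Real.log (∑ x, g x ^ (1 + γ) * f x ^ (-γ)))
      (𝓝[≠] (0 : ℝ)) (𝓝 (∑ x, g x * Real.log (g x / f x))) := by
  apply tendsto_log_div_mul_add_one_of_hasDerivAt
  · exact HasDerivAt.fun_sum fun x _ => hasDerivAt_rpow_one_add_mul_rpow_neg (hg x) (hf x)
  · simpa using hgs

/-- On a finite set, the logarithmic power divergence converges to the likelihood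
disparity (Kullback–Leibler divergence) as `γ → 0`. -/
theorem lpd_tendsto_likelihood_disparity {X : Type*} [Fintype X] [Nonempty X]
    (g f : X → ℝ) (hg : ∀ x, 0 < g x) (hf : ∀ x, 0 < f x)
    (hgs : ∑ x, g x = 1) (hfs : ∑ x, f x = 1) :
    Tendsto
      (fun γ : ℝ => (1 / (γ * (γ + 1))) * Real.log (∑ x, g x ^ (1 + γ) * f x ^ (-γ)))
      (𝓝[≠] (0 : ℝ)) (𝓝 (∑ x, g x * Real.log (g x / f x))) :=
  lpd_tendsto_likelihood_disparity_general g f hg hf hgs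
end
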